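/- Let n be an odd integer with n ≥ 5, T = {an + b(3n−2) + c(3n−1) : a,b,c ∈ ℕ}, F(T) = n(3n−7)/2 + 2, and S = T ∪ {F(T)}. Let L be an L-shape associated to Ap(S, F(T)), and let i be an integer with 3 ≤ i ≤ (n−1)/2. Set s'_i = 3(i−1)n + (i−1)(3n−2). Then: (1) if (3,1,0) ∈ L, then L ∩ Z(s'_i) = {(3(i−1), i−1, 0)}; (2) if (0,0,2) ∈ L, then L ∩ Z(s'_i) = {(0,0,2(i−1))}. In particular L ∩ Z(s'_i) ⊆ {(3(i−1), i−1, 0), (0,0,2(i−1))}. -/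
import Mathlib


/-- The numerical semigroup `T = ⟨n, 3n-2, 3n-1⟩` as a subset of `ℕ`. -/
def Tset (n : ℕ) : Set ℕ :=
  {s | ∃ a b c : ℕ, s = a * n + b * (3 * n - 2) + c * (3 * n - 1)}

/-- The Frobenius number of `T`, `F(T) = n(3n-7)/2 + 2` (exact division since `n` is odd). -/
def FT (n : ℕ) : ℕ := n * (3 * n - 7) / 2 + 2

/-- The numerical semigroup `S = T ∪ {F(T)} = ⟨n, 3n-2, 3n-1, F(T)⟩`. -/
def Sset (n : ℕ) : Set ℕ := Tset n ∪ {FT n}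

/-- The Apéry set `Ap(S, F(T)) = {s ∈ S | s - F(T) ∉ S}`. -/
def Ap (n : ℕ) : Set ℕ := {s ∈ Sset n | ¬ ∃ t ∈ Sset n, t + FT n = s}

/-- `phi n (x,y,z) = xn + y(3n-2) + z(3n-1)`. -/
def phi (n : ℕ) (p : ℕ × ℕ × ℕ) : ℕ :=
  p.1 * n + p.2.1 * (3 * n - 2) + p.2.2 * (3 * n - 1)

/-- The set of factorizations of `s` with respect to `(n, 3n-2, 3n-1)`. -/
def Zfac (n s : ℕ) : Set (ℕ × ℕ × ℕ) := {p | phi n p = s}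

/-- `p` is the normal form of `s`: a factorization with `z < 2`, `y < (n+1)/2`,
`x < (3n-1)/2`. -/
def IsNF (n s : ℕ) (p : ℕ × ℕ × ℕ) : Prop :=
  p ∈ Zfac n s ∧ p.2.2 < 2 ∧ p.2.1 < (n + 1) / 2 ∧ p.1 < (3 * n - 1) / 2

/-- `M_i`: elements of the Apéry set having exactly `i` factorizations. -/
def Mset (n i : ℕ) : Set ℕ := {s ∈ Ap n | (Zfac n s).ncard = i}

/-- `nf(M_i)`: normal forms of elements of `M_i`. -/
def nfM (n i : ℕ) : Set (ℕ × ℕ × ℕ) := {p | ∃ s ∈ Mset n i, IsNF n s p}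

/-- An L-shape associated with `Ap(S, F(T))`: (C1) `phi` is a bijection from `L` onto the
Apéry set; (C2) `L` is downward closed for the componentwise order. -/
def IsLShape (n : ℕ) (L : Set (ℕ × ℕ × ℕ)) : Prop :=
  Set.BijOn (phi n) L (Ap n) ∧ ∀ u ∈ L, ∀ v : ℕ × ℕ × ℕ, v ≤ u → v ∈ L

/-- The L-shape `F = F₁ ∪ F₂ ∪ F₃ ∪ F₄` (in `F₃`, `y ≤ (n-7)/2` is stated over the
integers as `2y + 7 ≤ n`, so that `F₃ = ∅` when `n = 5`). -/
def Fset (n : ℕ) : Set (ℕ × ℕ × ℕ) :=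
  {p | p.2.2 = 0 ∧ p.1 ≤ (3 * n - 3) / 2 ∧ p.2.1 ≤ (n - 3) / 2} ∪
  {p | p.2.2 = 0 ∧ p.1 ≤ 1 ∧ p.2.1 = (n - 1) / 2} ∪
  {p | p.2.2 = 1 ∧ p.1 ≤ (3 * n - 3) / 2 ∧ 2 * p.2.1 + 7 ≤ n} ∪
  {p | p.2.2 = 1 ∧ p.1 ≤ (3 * n - 5) / 2 ∧ p.2.1 = (n - 5) / 2}

lemma FT_eq (m : ℕ) (hm : 2 ≤ m) : FT (2 * m + 1) + m = 6 * m * m := by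
  obtain ⟨k, rfl⟩ : ∃ k, m = k + 2 := ⟨m - 2, by omega⟩
  unfold FT
  have h1 : 3 * (2 * (k + 2) + 1) - 7 = 6 * k + 8 := by omega
  rw [h1]
  have h2 : (2 * (k + 2) + 1) * (6 * k + 8) = (6 * k * k + 23 * k + 20) * 2 := by ring
  rw [h2, Nat.mul_div_cancel _ (by norm_num)]
  ring

lemma zfac_char (n j : ℕ) (hn : 5 ≤ n) (hj : 2 * j + 3 ≤ n) (p : ℕ × ℕ × ℕ) :
    p ∈ Zfac n (3 * j * n + j * (3 * n - 2)) ↔ ∃ k ≤ j, p = (3 * k, k, 2 * (j - k)) := by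
  obtain ⟨x, y, z⟩ := p
  constructor
  · intro h
    have hx : x * n + y * (3 * n - 2) + z * (3 * n - 1) = 3 * j * n + j * (3 * n - 2) := h
    zify [show 2 ≤ 3 * n by omega, show 1 ≤ 3 * n by omega] at hx
    set D : ℤ := (x : ℤ) + 3 * y + 3 * z - 6 * j with hDdef
    have hD : D * n = 2 * (y : ℤ) + z - 2 * j := by
      rw [hDdef]; linear_combination hx
    have hn' : (5 : ℤ) ≤ n := by exact_mod_cast hn
    have hj' : 2 * (j : ℤ) + 3 ≤ n := by exact_mod_cast hj
    have hx0 : (0 : ℤ) ≤ x := Int.natCast_nonneg x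
    have hy0 : (0 : ℤ) ≤ y := Int.natCast_nonneg y
    have hz0 : (0 : ℤ) ≤ z := Int.natCast_nonneg z
    have hj0 : (0 : ℤ) ≤ j := Int.natCast_nonneg j
    have hD0 : D = 0 := by
      rcases lt_trichotomy D 0 with h1 | h1 | h1
      · exfalso
        have hnn : (0 : ℤ) ≤ (-D - 1) * n := mul_nonneg (by linarith) (by linarith)
        linarith
      · exact h1
      · exfalso
        have hnn : (0 : ℤ) ≤ (D - 1) * (3 * n - 2) := mul_nonneg (by linarith) (by linarith)
        linarith
    have hB : 2 * (y : ℤ) + z = 2 * j := by rw [hD0] at hD; linarith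
    have hA : (x : ℤ) + 3 * y + 3 * z = 6 * j := by
      have : D = 0 := hD0
      rw [hDdef] at this; linarith
    have hBn : 2 * y + z = 2 * j := by exact_mod_cast hB
    have hAn : x + 3 * y + 3 * z = 6 * j := by exact_mod_cast hA
    refine ⟨y, by omega, ?_⟩
    simp only [Prod.mk.injEq]
    exact ⟨by omega, trivial, by omega⟩
  · rintro ⟨k, hk, hp⟩
    have hkey : phi n (3 * k, k, 2 * (j - k)) = 3 * j * n + j * (3 * n - 2) := by
      show 3 * k * n + k * (3 * n - 2) + 2 * (j - k) * (3 * n - 1) = 3 * j * n + j * (3 * n - 2)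
      zify [show 2 ≤ 3 * n by omega, show 1 ≤ 3 * n by omega, hk]
      ring
    show phi n _ = _
    rw [hp]
    exact hkey

lemma sp_mem_Ap (m j : ℕ) (hm : 2 ≤ m) (hj2 : 2 ≤ j) (hjm : j + 1 ≤ m) :
    3 * j * (2 * m + 1) + j * (3 * (2 * m + 1) - 2) ∈ Ap (2 * m + 1) := by
  have hFT : FT (2 * m + 1) + m = 6 * m * m := FT_eq m hm
  constructor
  · exact Or.inl ⟨3 * j, j, 0, by ring⟩
  · rintro ⟨t, ht, heq⟩
    have hm' : (2 : ℤ) ≤ m := by exact_mod_cast hm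
    have hj2' : (2 : ℤ) ≤ j := by exact_mod_cast hj2
    have hjm' : (j : ℤ) + 1 ≤ m := by exact_mod_cast hjm
    have hFT' : (FT (2 * m + 1) : ℤ) = 6 * (m : ℤ) * m - m := by
      have h : ((FT (2 * m + 1) + m : ℕ) : ℤ) = ((6 * m * m : ℕ) : ℤ) := by rw [hFT]
      push_cast at h
      linarith
    rcases ht with ⟨a, b, c, rfl⟩ | ht
    · zify [show 2 ≤ 3 * (2 * m + 1) by omega, show 1 ≤ 3 * (2 * m + 1) by omega] at heq
      rw [hFT'] at heq
      have ha0 : (0 : ℤ) ≤ a := Int.natCast_nonneg a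
      have hb0 : (0 : ℤ) ≤ b := Int.natCast_nonneg b
      have hc0 : (0 : ℤ) ≤ c := Int.natCast_nonneg c
      set D : ℤ := (a : ℤ) + 3 * b + 3 * c + 3 * m - 6 * j with hDdef
      have hD : D * (2 * m + 1) = 4 * m - 2 * j + 2 * b + c := by
        rw [hDdef]; linear_combination heq
      have hD1 : 1 ≤ D := by
        by_contra hcon
        push_neg at hcon
        have h2 : D * (2 * m + 1) ≤ 0 * (2 * m + 1) :=
          mul_le_mul_of_nonneg_right (by linarith) (by linarith)
        rw [zero_mul] at h2
        linarith
      rcases eq_or_lt_of_le hD1 with h1 | h1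
      · rw [← h1] at hD; linarith
      · have hnn2 : (0 : ℤ) ≤ (D - 2) * (6 * m + 1) :=
          mul_nonneg (by linarith) (by linarith)
        linarith
    · simp only [Set.mem_singleton_iff] at ht
      subst ht
      zify [show 2 ≤ 3 * (2 * m + 1) by omega] at heq
      rw [hFT'] at heq
      have hnn2 : (0 : ℤ) ≤ ((m : ℤ) - 1 - j) * (12 * m) :=
        mul_nonneg (by linarith) (by linarith)
      linarith

lemma triple_le {a b c d e f : ℕ} (h1 : a ≤ d) (h2 : b ≤ e) (h3 : c ≤ f) :
    (a, b, c) ≤ (d, e, f) :=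
  Prod.mk_le_mk.mpr ⟨h1, Prod.mk_le_mk.mpr ⟨h2, h3⟩⟩

/-- Restrictions an L-shape imposes on the factorizations of
`s'_i = 3(i-1)n + (i-1)(3n-2)` it may contain, for `3 ≤ i ≤ (n-1)/2`. -/
theorem stmt17 (n : ℕ) (hodd : Odd n) (hn : 5 ≤ n)
    (L : Set (ℕ × ℕ × ℕ)) (hL : IsLShape n L)
    (i : ℕ) (hi3 : 3 ≤ i) (hin : i ≤ (n - 1) / 2) :
    (((3 : ℕ), (1 : ℕ), (0 : ℕ)) ∈ L →
      L ∩ Zfac n (3 * (i - 1) * n + (i - 1) * (3 * n - 2)) = {(3 * (i - 1), i - 1, 0)}) ∧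
    (((0 : ℕ), (0 : ℕ), (2 : ℕ)) ∈ L →
      L ∩ Zfac n (3 * (i - 1) * n + (i - 1) * (3 * n - 2)) = {(0, 0, 2 * (i - 1))}) ∧
    L ∩ Zfac n (3 * (i - 1) * n + (i - 1) * (3 * n - 2)) ⊆
      {(3 * (i - 1), i - 1, 0), (0, 0, 2 * (i - 1))} := by
  obtain ⟨m, rfl⟩ : ∃ m, n = 2 * m + 1 := by
    obtain ⟨r, hr⟩ := hodd; exact ⟨r, by omega⟩
  set n := 2 * m + 1 with hndef
  have hm2 : 2 ≤ m := by omega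
  set j := i - 1 with hjdef
  have hj2 : 2 ≤ j := by omega
  have hjm : j + 1 ≤ m := by omega
  obtain ⟨hbij, hdown⟩ := hL
  have hinj := hbij.2.1
  have hchar := zfac_char n j (by omega) (by omega)
  have hAp : 3 * j * n + j * (3 * n - 2) ∈ Ap n := sp_mem_Ap m j hm2 hj2 hjm
  obtain ⟨q, hqL, hqphi⟩ := hbij.2.2 hAp
  have h62 : phi n ((3 : ℕ), (1 : ℕ), (0 : ℕ)) = phi n ((0 : ℕ), (0 : ℕ), (2 : ℕ)) := by
    show 3 * n + 1 * (3 * n - 2) + 0 * (3 * n - 1) = 0 * n + 0 * (3 * n - 2) + 2 * (3 * n - 1)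
    omega
  have hnotboth : ¬(((3 : ℕ), (1 : ℕ), (0 : ℕ)) ∈ L ∧ ((0 : ℕ), (0 : ℕ), (2 : ℕ)) ∈ L) := by
    rintro ⟨h1, h2⟩
    have := hinj h1 h2 h62
    simp at this
  have hsub : L ∩ Zfac n (3 * j * n + j * (3 * n - 2)) ⊆
      {(3 * j, j, 0), (0, 0, 2 * j)} := by
    rintro p ⟨hpL, hpZ⟩
    obtain ⟨k, hk, rfl⟩ := (hchar p).1 hpZ
    rcases eq_or_ne k 0 with rfl | hk0
    · right
      simp
    rcases eq_or_ne k j with rfl | hkj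
    · left
      simp
    · exfalso
      refine hnotboth ⟨hdown _ hpL _ ?_, hdown _ hpL _ ?_⟩
      · exact triple_le (by omega) (by omega) (by omega)
      · exact triple_le (by omega) (by omega) (by omega)
  have hqZ : q ∈ Zfac n (3 * j * n + j * (3 * n - 2)) := hqphi
  have hq2 := hsub ⟨hqL, hqZ⟩
  refine ⟨?_, ?_, hsub⟩
  · intro h310
    apply Set.Subset.antisymm
    · rintro p hp
      have hp2 := hsub hp
      rcases hp2 with rfl | hp2
      · rfl
      · exfalso
        simp only [Set.mem_singleton_iff] at hp2
        subst hp2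
        refine hnotboth ⟨h310, hdown _ hp.1 _ ?_⟩
        exact triple_le (by omega) (by omega) (by omega)
    · rintro p rfl
      rcases hq2 with rfl | hq2
      · exact ⟨hqL, hqZ⟩
      · exfalso
        simp only [Set.mem_singleton_iff] at hq2
        subst hq2
        refine hnotboth ⟨h310, hdown _ hqL _ ?_⟩
        exact triple_le (by omega) (by omega) (by omega)
  · intro h002
    apply Set.Subset.antisymm
    · rintro p hp
      have hp2 := hsub hp
      rcases hp2 with rfl | hp2
      · exfalso
        refine hnotboth ⟨hdown _ hp.1 _ ?_, h002⟩
        exact triple_le (by omega) (by omega) (by omega)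
      · exact hp2
    · rintro p rfl
      rcases hq2 with rfl | hq2
      · exfalso
        refine hnotboth ⟨hdown _ hqL _ ?_, h002⟩
        exact triple_le (by omega) (by omega) (by omega)
      · simp only [Set.mem_singleton_iff] at hq2
        subst hq2
        exact ⟨hqL, hqZ⟩
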